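/- arXiv:1809.05696 — 2 statements merged into one kernel-verified Lean document; each statement's English description precedes it below -/
import Mathlib

section
/- Let w : ℝ → (0,∞) be a continuous 2π-periodic function that is angle-separable and satisfies max w > min w. Then there exists α₀ ∈ ℝ such that w(α₀) = max w, w(α₀+π) = min w, w(α₀ + θ) = w(α₀ − θ) for all θ ∈ ℝ, and the function θ ↦ w(α₀ + θ) is nonincreasing on [0, π]. In other words, the corresponding function on the unit circle is axially symmetric with respect to the diameter through angle α₀ and monotone from the maximum arc to the minimum arc. -/
/-!
The reflection integral `Φ(α) = ∫₀^π w(α + θ) dθ - ∫₀^π w(α - θ) dθ` is continuous and changes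
sign under `α ↦ α + π`, so it vanishes at some `α`. Angle-separability gives the integrand a
constant sign, so `Φ(α) = 0` forces `w` to be symmetric about `α`. Translating `α` to `0`, if `w`
were neither monotone nor antitone on `[0, π]`, then `Φ` would take both signs at points of
`(0, π)`, hence vanish at some `s ∈ (0, π)`; symmetry about both `0` and `s` makes `2s` and
`2π - 2s` periods, and a separable function with a period `T ≤ π` is constant. So `w` is monotone
on `[0, π]`, and the axis is `α` or `α + π` according to the direction.
-/

open Set Function Real

theorem integral_lt_integral_of_le_on_Ioo {f g : ℝ → ℝ} {a b : ℝ} (hab : a < b)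
    (hf : ContinuousOn f (Icc a b)) (hg : ContinuousOn g (Icc a b))
    (hle : ∀ x ∈ Ioo a b, f x ≤ g x) (hlt : ∃ c ∈ Ioo a b, f c < g c) :
    ∫ x in a..b, f x < ∫ x in a..b, g x := by
  rw [← closure_Ioo hab.ne] at hf hg
  have hle' : ∀ x ∈ closure (Ioo a b), f x ≤ g x := le_on_closure hle hf hg
  rw [closure_Ioo hab.ne] at hf hg hle'
  obtain ⟨c, hc, hfgc⟩ := hlt
  exact intervalIntegral.integral_lt_integral_of_continuousOn_of_le_of_exists_lt hab hf hg
    (fun x hx => hle' x (Ioc_subset_Icc_self hx)) ⟨c, Ioo_subset_Icc_self hc, hfgc⟩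

theorem Continuous.exists_eq_zero_of_antiperiodic {f : ℝ → ℝ} {c : ℝ} (hf : Continuous f)
    (hc : Antiperiodic f c) : ∃ x, f x = 0 := by
  have h0 : (0 : ℝ) ∈ uIcc (f 0) (f c) := by
    rw [hc.eq, mem_uIcc]
    rcases le_total (f 0) 0 with h | h
    · exact Or.inl ⟨h, by linarith⟩
    · exact Or.inr ⟨by linarith, h⟩
  obtain ⟨x, -, hx⟩ := intermediate_value_uIcc hf.continuousOn h0
  exact ⟨x, hx⟩

theorem forall_eq_zero_of_odd_of_periodic {g : ℝ → ℝ} (hodd : g.Odd) (hper : Periodic g (2 * π))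
    (h : ∀ θ ∈ Icc 0 π, g θ = 0) (θ : ℝ) : g θ = 0 := by
  obtain ⟨y, ⟨hy₁, hy₂⟩, hθy⟩ := hper.exists_mem_Ico two_pi_pos θ (-π)
  rw [hθy]
  rcases le_total 0 y with hy | hy
  · exact h y ⟨hy, by linarith⟩
  · rw [← neg_neg y, hodd, h (-y) ⟨by linarith, by linarith⟩, neg_zero]

theorem exists_mem_Icc_eq_of_symmetric {w : ℝ → ℝ} {α : ℝ} (hper : Periodic w (2 * π))
    (hsym : ∀ θ, w (α + θ) = w (α - θ)) (t : ℝ) : ∃ θ ∈ Icc 0 π, w t = w (α + θ) := by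
  obtain ⟨y, ⟨hy₁, hy₂⟩, hty⟩ := hper.exists_mem_Ico two_pi_pos t (α - π)
  rw [hty]
  rcases le_total α y with hy | hy
  · exact ⟨y - α, ⟨by linarith, by linarith⟩, by rw [add_sub_cancel]⟩
  · exact ⟨α - y, ⟨by linarith, by linarith⟩, by rw [hsym, sub_sub_cancel]⟩

theorem symmetric_add_pi {w : ℝ → ℝ} {α : ℝ} (hper : Periodic w (2 * π))
    (hsym : ∀ θ, w (α + θ) = w (α - θ)) (θ : ℝ) : w (α + π + θ) = w (α + π - θ) := by
  rw [add_assoc, hsym, ← hper]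
  ring_nf

theorem antitoneOn_add_pi_of_monotoneOn {w : ℝ → ℝ} {α : ℝ} (hper : Periodic w (2 * π))
    (hsym : ∀ θ, w (α + θ) = w (α - θ))
    (hmono : MonotoneOn (fun θ => w (α + θ)) (Icc 0 π)) :
    AntitoneOn (fun θ => w (α + π + θ)) (Icc 0 π) := by
  have hflip : ∀ θ, w (α + π + θ) = w (α + (π - θ)) := fun θ => by
    rw [symmetric_add_pi hper hsym, add_sub_assoc]
  intro x hx y hy hxy
  simp only [hflip]
  exact hmono ⟨by linarith [hy.2], by linarith [hy.1]⟩ ⟨by linarith [hx.2], by linarith [hx.1]⟩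
    (by linarith)

theorem forall_le_and_forall_ge_of_antitoneOn {w : ℝ → ℝ} {α : ℝ} (hper : Periodic w (2 * π))
    (hsym : ∀ θ, w (α + θ) = w (α - θ))
    (hanti : AntitoneOn (fun θ => w (α + θ)) (Icc 0 π)) :
    (∀ t, w t ≤ w α) ∧ (∀ t, w (α + π) ≤ w t) := by
  have h0 : (0 : ℝ) ∈ Icc 0 π := ⟨le_rfl, pi_pos.le⟩
  have hπ : π ∈ Icc 0 π := ⟨pi_pos.le, le_rfl⟩
  constructor <;> intro t <;> obtain ⟨θ, hθ, hwt⟩ := exists_mem_Icc_eq_of_symmetric hper hsym t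
  · simpa [hwt] using hanti h0 hθ hθ.1
  · simpa [hwt] using hanti hθ hπ hθ.2

noncomputable def reflectionIntegral (w : ℝ → ℝ) (α : ℝ) : ℝ :=
  (∫ θ in 0..π, w (α + θ)) - ∫ θ in 0..π, w (α - θ)

theorem continuous_reflectionIntegral {w : ℝ → ℝ} (hcont : Continuous w) :
    Continuous (reflectionIntegral w) := by
  unfold reflectionIntegral
  fun_prop

theorem reflectionIntegral_antiperiodic {w : ℝ → ℝ} (hper : Periodic w (2 * π)) :
    Antiperiodic (reflectionIntegral w) π := by
  intro α
  have h₁ : ∫ θ in 0..π, w (α + π + θ) = ∫ θ in 0..π, w (α - θ) := by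
    have h := intervalIntegral.integral_comp_sub_left (fun θ => w (α + π + θ)) (a := 0) (b := π) π
    rw [sub_self, sub_zero] at h
    rw [← h]
    congr 1 with θ
    rw [← hper (α - θ)]
    ring_nf
  have h₂ : ∫ θ in 0..π, w (α + π - θ) = ∫ θ in 0..π, w (α + θ) := by
    simp_rw [add_sub_assoc]
    rw [intervalIntegral.integral_comp_sub_left (fun θ => w (α + θ)), sub_self, sub_zero]
  rw [reflectionIntegral, reflectionIntegral, h₁, h₂, neg_sub]

def AngleSeparable (w : ℝ → ℝ) : Prop :=
  ∀ α : ℝ, (∀ θ ∈ Ioo 0 π, w (α - θ) ≤ w (α + θ)) ∨ (∀ θ ∈ Ioo 0 π, w (α + θ) ≤ w (α - θ))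

namespace AngleSeparable

variable {w : ℝ → ℝ}

theorem comp_const_add (hsep : AngleSeparable w) (a : ℝ) : AngleSeparable (fun t => w (a + t)) :=
  fun α => by simpa only [add_sub_assoc, add_assoc] using hsep (a + α)

theorem reflectionIntegral_pos (hsep : AngleSeparable w) (hcont : Continuous w) {α θ₀ : ℝ}
    (hθ₀ : θ₀ ∈ Ioo 0 π) (hlt : w (α - θ₀) < w (α + θ₀)) : 0 < reflectionIntegral w α := by
  have hle : ∀ θ ∈ Ioo 0 π, w (α - θ) ≤ w (α + θ) :=
    (hsep α).resolve_right fun h => (h θ₀ hθ₀).not_gt hlt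
  exact sub_pos.2 (integral_lt_integral_of_le_on_Ioo pi_pos (by fun_prop) (by fun_prop) hle
    ⟨θ₀, hθ₀, hlt⟩)

theorem reflectionIntegral_neg (hsep : AngleSeparable w) (hcont : Continuous w) {α θ₀ : ℝ}
    (hθ₀ : θ₀ ∈ Ioo 0 π) (hlt : w (α + θ₀) < w (α - θ₀)) : reflectionIntegral w α < 0 := by
  have hle : ∀ θ ∈ Ioo 0 π, w (α + θ) ≤ w (α - θ) :=
    (hsep α).resolve_left fun h => (h θ₀ hθ₀).not_gt hlt
  exact sub_neg.2 (integral_lt_integral_of_le_on_Ioo pi_pos (by fun_prop) (by fun_prop) hle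
    ⟨θ₀, hθ₀, hlt⟩)

theorem symmetric_of_reflectionIntegral_eq_zero (hsep : AngleSeparable w) (hcont : Continuous w)
    (hper : Periodic w (2 * π)) {α : ℝ} (h0 : reflectionIntegral w α = 0) (θ : ℝ) :
    w (α + θ) = w (α - θ) := by
  have hIoo : ∀ θ ∈ Ioo 0 π, w (α + θ) = w (α - θ) := fun θ hθ => by
    by_contra hne
    rcases lt_or_gt_of_ne hne with hlt | hlt
    · exact (hsep.reflectionIntegral_neg hcont hθ hlt).ne h0
    · exact (hsep.reflectionIntegral_pos hcont hθ hlt).ne' h0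
  have hIcc : ∀ θ ∈ Icc 0 π, w (α + θ) - w (α - θ) = 0 := by
    rintro θ ⟨hθ₀, hθπ⟩
    rcases hθ₀.eq_or_lt with rfl | hθ₀
    · simp
    rcases hθπ.eq_or_lt with rfl | hθπ
    · rw [← hper (α - π)]; ring_nf
    · rw [hIoo θ ⟨hθ₀, hθπ⟩, sub_self]
  have hodd : Function.Odd fun θ => w (α + θ) - w (α - θ) := fun θ => by
    simp only [sub_neg_eq_add, ← sub_eq_add_neg, neg_sub]
  have hper' : Periodic (fun θ => w (α + θ) - w (α - θ)) (2 * π) := fun θ => by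
    simp only [← add_assoc, hper _, sub_add_eq_sub_sub, hper.sub_eq]
  exact sub_eq_zero.1 (forall_eq_zero_of_odd_of_periodic hodd hper' hIcc θ)

theorem apply_add_eq_of_periodic (hsep : AngleSeparable w) {T : ℝ} (hT : Periodic w T)
    (hTπ : T ≤ π) (x : ℝ) {d : ℝ} (hd : d ∈ Ioo 0 T) : w (x + d) = w x := by
  obtain ⟨hd₀, hdT⟩ := hd
  -- The pairs `(x, x + d)` and `(x + d - T, x + T)` are reflected across the same centre.
  have h₁ : x + d / 2 - d / 2 = x := by ring
  have h₂ : x + d / 2 + d / 2 = x + d := by ring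
  have h₃ : x + d / 2 - (T - d / 2) = x + d - T := by ring
  have h₄ : x + d / 2 + (T - d / 2) = x + T := by ring
  have hθ : d / 2 ∈ Ioo 0 π := ⟨by linarith, by linarith⟩
  have hθ' : T - d / 2 ∈ Ioo 0 π := ⟨by linarith, by linarith⟩
  rcases hsep (x + d / 2) with h | h
  · have hle := h _ hθ
    have hge := h _ hθ'
    rw [h₁, h₂] at hle
    rw [h₃, h₄, hT.sub_eq, hT] at hge
    exact le_antisymm hge hle
  · have hge := h _ hθ
    have hle := h _ hθ'
    rw [h₁, h₂] at hge
    rw [h₃, h₄, hT.sub_eq, hT] at hle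
    exact le_antisymm hge hle

theorem isLocallyConstant_of_periodic (hsep : AngleSeparable w) {T : ℝ} (hT : Periodic w T)
    (hT₀ : 0 < T) (hTπ : T ≤ π) : IsLocallyConstant w := by
  refine (IsLocallyConstant.iff_eventually_eq w).2 fun x => ?_
  filter_upwards [Ioo_mem_nhds (by linarith : x - T < x) (by linarith : x < x + T)]
    with y ⟨hy₁, hy₂⟩
  rcases lt_trichotomy y x with hyx | rfl | hyx
  · have := hsep.apply_add_eq_of_periodic hT hTπ y ⟨sub_pos.2 hyx, by linarith⟩
    rwa [add_sub_cancel, eq_comm] at this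
  · rfl
  · simpa using hsep.apply_add_eq_of_periodic hT hTπ x ⟨sub_pos.2 hyx, by linarith⟩

theorem exists_reflectionIntegral_pos (hsep : AngleSeparable w) (hcont : Continuous w) {a b : ℝ}
    (ha : a ∈ Icc 0 π) (hb : b ∈ Icc 0 π) (hab : a ≤ b) (hlt : w a < w b) :
    ∃ s ∈ Ioo 0 π, 0 < reflectionIntegral w s := by
  have hab' : a < b := hab.lt_of_ne (by rintro rfl; exact lt_irrefl _ hlt)
  refine ⟨(a + b) / 2, ⟨by linarith [ha.1], by linarith [hb.2]⟩,
    hsep.reflectionIntegral_pos hcont (θ₀ := (b - a) / 2)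
      ⟨by linarith, by linarith [ha.1, hb.2]⟩ ?_⟩
  rwa [show (a + b) / 2 + (b - a) / 2 = b by ring, show (a + b) / 2 - (b - a) / 2 = a by ring]

theorem exists_reflectionIntegral_neg (hsep : AngleSeparable w) (hcont : Continuous w) {a b : ℝ}
    (ha : a ∈ Icc 0 π) (hb : b ∈ Icc 0 π) (hab : a ≤ b) (hlt : w b < w a) :
    ∃ s ∈ Ioo 0 π, reflectionIntegral w s < 0 := by
  have hab' : a < b := hab.lt_of_ne (by rintro rfl; exact lt_irrefl _ hlt)
  refine ⟨(a + b) / 2, ⟨by linarith [ha.1], by linarith [hb.2]⟩,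
    hsep.reflectionIntegral_neg hcont (θ₀ := (b - a) / 2)
      ⟨by linarith, by linarith [ha.1, hb.2]⟩ ?_⟩
  rwa [show (a + b) / 2 + (b - a) / 2 = b by ring, show (a + b) / 2 - (b - a) / 2 = a by ring]

theorem monotoneOn_or_antitoneOn (hsep : AngleSeparable w) (hcont : Continuous w)
    (hper : Periodic w (2 * π)) (heven : Function.Even w) :
    MonotoneOn w (Icc 0 π) ∨ AntitoneOn w (Icc 0 π) := by
  by_contra! h
  simp only [MonotoneOn, AntitoneOn, not_forall, not_le, exists_prop] at h
  obtain ⟨⟨a, ha, b, hb, hab, hba⟩, ⟨c, hc, d, hd, hcd, hcd'⟩⟩ := h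
  obtain ⟨s₁, hs₁, hneg⟩ := hsep.exists_reflectionIntegral_neg hcont ha hb hab hba
  obtain ⟨s₂, hs₂, hpos⟩ := hsep.exists_reflectionIntegral_pos hcont hc hd hcd hcd'
  obtain ⟨s, hs, hzero⟩ := isPreconnected_Ioo.intermediate_value hs₁ hs₂
    (continuous_reflectionIntegral hcont).continuousOn ⟨hneg.le, hpos.le⟩
  have hsym := hsep.symmetric_of_reflectionIntegral_eq_zero hcont hper hzero
  have hper₂ : Periodic w (2 * s) := fun t => by
    rw [show t + 2 * s = s + (s + t) by ring, hsym, show s - (s + t) = -t by ring, heven]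
  have hconst : IsLocallyConstant w := by
    rcases le_total s (π / 2) with hs' | hs'
    · exact hsep.isLocallyConstant_of_periodic hper₂ (by linarith [hs.1]) (by linarith)
    · exact hsep.isLocallyConstant_of_periodic (hper.sub_period hper₂) (by linarith [hs.2])
        (by linarith)
  exact hba.ne (hconst.apply_eq_of_preconnectedSpace b a)

end AngleSeparable

theorem stmt_2_general (w : ℝ → ℝ)
    (hcont : Continuous w)
    (hper : ∀ t, w (t + 2 * Real.pi) = w t)
    (hsep : ∀ α : ℝ,
      (∀ θ ∈ Set.Ioo (0 : ℝ) Real.pi, w (α - θ) ≤ w (α + θ)) ∨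
      (∀ θ ∈ Set.Ioo (0 : ℝ) Real.pi, w (α + θ) ≤ w (α - θ))) :
    ∃ α₀ : ℝ,
      (∀ t, w t ≤ w α₀) ∧
      (∀ t, w (α₀ + Real.pi) ≤ w t) ∧
      (∀ θ : ℝ, w (α₀ + θ) = w (α₀ - θ)) ∧
      AntitoneOn (fun θ => w (α₀ + θ)) (Set.Icc 0 Real.pi) := by
  have hsep : AngleSeparable w := hsep
  have hper : Periodic w (2 * π) := hper
  obtain ⟨α, hα⟩ := (continuous_reflectionIntegral hcont).exists_eq_zero_of_antiperiodic
    (reflectionIntegral_antiperiodic hper)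
  have hsym := hsep.symmetric_of_reflectionIntegral_eq_zero hcont hper hα
  have heven : Function.Even fun θ => w (α + θ) := fun θ => by
    simp only [← sub_eq_add_neg, hsym]
  rcases (hsep.comp_const_add α).monotoneOn_or_antitoneOn (by fun_prop) (hper.const_add α)
    heven with hmono | hanti
  · have hsym' := symmetric_add_pi hper hsym
    have hanti' := antitoneOn_add_pi_of_monotoneOn hper hsym hmono
    obtain ⟨hmax, hmin⟩ := forall_le_and_forall_ge_of_antitoneOn hper hsym' hanti'
    exact ⟨α + π, hmax, hmin, hsym', hanti'⟩
  · obtain ⟨hmax, hmin⟩ := forall_le_and_forall_ge_of_antitoneOn hper hsym hanti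
    exact ⟨α, hmax, hmin, hsym, hanti⟩

/-- A continuous, positive, 2π-periodic, angle-separable, nonconstant
function `w` is axially symmetric about some angle `α₀` at which it attains its
maximum (with minimum at the antipodal angle), and is nonincreasing from the
maximum to the minimum. -/
theorem stmt_2 (w : ℝ → ℝ)
    (hpos : ∀ t, 0 < w t)
    (hcont : Continuous w)
    (hper : ∀ t, w (t + 2 * Real.pi) = w t)
    (hsep : ∀ α : ℝ,
      (∀ θ ∈ Set.Ioo (0 : ℝ) Real.pi, w (α - θ) ≤ w (α + θ)) ∨
      (∀ θ ∈ Set.Ioo (0 : ℝ) Real.pi, w (α + θ) ≤ w (α - θ)))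
    (hnc : ∃ s t : ℝ, w s < w t) :
    ∃ α₀ : ℝ,
      (∀ t, w t ≤ w α₀) ∧
      (∀ t, w (α₀ + Real.pi) ≤ w t) ∧
      (∀ θ : ℝ, w (α₀ + θ) = w (α₀ - θ)) ∧
      AntitoneOn (fun θ => w (α₀ + θ)) (Set.Icc 0 Real.pi) :=
  stmt_2_general w hcont hper hsep
end

section
/- Let N ≥ 3, R > 0, and let G be the Green-type kernel G(x,y) = 1/|x−y|^{N−2} − 1/((|x|/R)·|y − R²x/|x|²|)^{N−2}, defined for x, y ∈ B_R with x ≠ 0, y ≠ 0, and x ≠ y. Let H ⊂ ℝ^N be an open half-space with 0 ∈ ∂H and let σ_H be the reflection across ∂H. Then for all x, y ∈ H ∩ B_R with x ≠ y, G(x, y) ≥ G(σ_H x, y). -/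
/-!
Put `A = ‖x - y‖²` and `s = (R² - ‖x‖²)(R² - ‖y‖²)/R²`. Expanding the norm of `y - R²x/‖x‖²`
gives `G(x,y) = f(A) - f(A + s)` with `f(u) = u^(-(N-2)/2)`. The reflection preserves `‖x‖`, hence
`s`, and raises `‖x - y‖²` by `T = 4⟪a,x⟫⟪a,y⟫/‖a‖² ≥ 0`, so `G(σ_H x, y) = f(A + T) - f(A + T + s)`.
Since `f` is convex on `(0, ∞)`, its decrements `f(u) - f(u + s)` decrease in `u`.
-/

open scoped RealInnerProductSpace

/-- The reflection of `ℝ^N` across the hyperplane `{x : ⟪a,x⟫ = 0}` through the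
origin, bounding the open half-space `H = {x : ⟪a,x⟫ > 0}`. -/
noncomputable def reflectHyp0 {E : Type*} [NormedAddCommGroup E] [InnerProductSpace ℝ E]
    (a : E) (x : E) : E :=
  x - ((2 * ⟪a, x⟫) / ⟪a, a⟫) • a

/-- The Green-type kernel of the ball `B_R ⊂ ℝ^N`:
`G(x,y) = 1/|x−y|^{N−2} − 1/((|x|/R)·|y − R²x/|x|²|)^{N−2}`. -/
noncomputable def greenK (N : ℕ) (R : ℝ) (x y : EuclideanSpace ℝ (Fin N)) : ℝ :=
  1 / ‖x - y‖ ^ (N - 2) -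
    1 / ((‖x‖ / R) * ‖y - (R ^ 2 / ‖x‖ ^ 2) • x‖) ^ (N - 2)

open Real Set

theorem convexOn_rpow_of_nonpos {p : ℝ} (hp : p ≤ 0) :
    ConvexOn ℝ (Ioi 0) fun x : ℝ ↦ x ^ p := by
  have hexp : ConvexOn ℝ univ fun t ↦ exp (p * t) :=
    convexOn_exp.comp_linearMap (LinearMap.mul ℝ ℝ p)
  have himage : log '' Ioi 0 = univ := eq_univ_of_forall fun t ↦ ⟨exp t, exp_pos t, log_exp t⟩
  refine ((himage ▸ hexp).comp_concaveOn strictConcaveOn_log_Ioi.concaveOn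
    fun _ _ _ _ h ↦ exp_le_exp.2 (mul_le_mul_of_nonpos_left h hp)).congr fun x hx ↦ ?_
  simp [rpow_def_of_pos hx, mul_comm]

theorem ConvexOn.increment_mono {s : Set ℝ} {f : ℝ → ℝ} (hf : ConvexOn ℝ s f) {u v d : ℝ}
    (hu : u ∈ s) (hvd : v + d ∈ s) (huv : u ≤ v) (hd : 0 ≤ d) :
    f (u + d) - f u ≤ f (v + d) - f v := by
  rcases (show 0 ≤ v + d - u by linarith).eq_or_lt with h | h
  · obtain rfl : d = 0 := by linarith
    obtain rfl : u = v := by linarith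
    rfl
  set θ := d / (v + d - u)
  have hθ0 : 0 ≤ θ := div_nonneg hd h.le
  have hne := h.ne'
  have hθ1 : 1 - θ = (v - u) / (v + d - u) := by simp only [θ]; field_simp; ring
  have hθ1' : 0 ≤ 1 - θ := hθ1 ▸ div_nonneg (sub_nonneg.2 huv) h.le
  have h₁ := hf.2 hu hvd hθ1' hθ0 (by ring)
  have h₂ := hf.2 hu hvd hθ0 hθ1' (by ring)
  have e₁ : (1 - θ) • u + θ • (v + d) = u + d := by simp only [θ, smul_eq_mul]; field_simp; ring
  have e₂ : θ • u + (1 - θ) • (v + d) = v := by simp only [θ, smul_eq_mul]; field_simp; ring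
  rw [e₁, smul_eq_mul, smul_eq_mul] at h₁
  rw [e₂, smul_eq_mul, smul_eq_mul] at h₂
  linarith

section InnerProductSpace

variable {E : Type*} [NormedAddCommGroup E] [InnerProductSpace ℝ E]

theorem reflectHyp0_eq_reflection (a x : E) : reflectHyp0 a x = (ℝ ∙ a)ᗮ.reflection x := by
  rw [Submodule.reflection_orthogonal_apply, Submodule.reflection_singleton_apply, reflectHyp0,
    real_inner_self_eq_norm_sq]
  module

theorem norm_reflectHyp0 (a x : E) : ‖reflectHyp0 a x‖ = ‖x‖ := by
  rw [reflectHyp0_eq_reflection, LinearIsometryEquiv.norm_map]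

theorem inner_reflectHyp0_left (a x y : E) :
    ⟪reflectHyp0 a x, y⟫ = ⟪x, y⟫ - 2 * ⟪a, x⟫ * ⟪a, y⟫ / ⟪a, a⟫ := by
  rw [reflectHyp0, inner_sub_left, real_inner_smul_left]
  ring

theorem norm_reflectHyp0_sub_sq (a x y : E) :
    ‖reflectHyp0 a x - y‖ ^ 2 = ‖x - y‖ ^ 2 + 4 * ⟪a, x⟫ * ⟪a, y⟫ / ⟪a, a⟫ := by
  rw [norm_sub_sq_real, norm_sub_sq_real, norm_reflectHyp0, inner_reflectHyp0_left]
  ring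

theorem sq_norm_mul_norm_sub_inversion {x : E} (hx : x ≠ 0) {R : ℝ} (hR : R ≠ 0) (y : E) :
    (‖x‖ / R * ‖y - (R ^ 2 / ‖x‖ ^ 2) • x‖) ^ 2 =
      ‖x - y‖ ^ 2 + (R ^ 2 - ‖x‖ ^ 2) * (R ^ 2 - ‖y‖ ^ 2) / R ^ 2 := by
  have : ‖x‖ ≠ 0 := norm_ne_zero_iff.2 hx
  rw [mul_pow, div_pow, norm_sub_sq_real, norm_sub_sq_real, norm_smul, real_inner_smul_right,
    real_inner_comm, Real.norm_eq_abs, abs_of_nonneg (by positivity)]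
  field_simp
  ring

end InnerProductSpace

theorem one_div_pow_eq_sq_rpow {t : ℝ} (ht : 0 ≤ t) (m : ℕ) :
    1 / t ^ m = (t ^ 2) ^ (-(m / 2 : ℝ)) := by
  rw [rpow_neg (sq_nonneg t), ← rpow_natCast t 2, ← rpow_mul ht, ← rpow_natCast, one_div]
  congr 2
  ring

theorem greenK_eq_rpow {N : ℕ} {R : ℝ} (hR : 0 < R) {x : EuclideanSpace ℝ (Fin N)} (hx : x ≠ 0)
    (y : EuclideanSpace ℝ (Fin N)) :
    greenK N R x y = (‖x - y‖ ^ 2) ^ (-((N - 2 : ℕ) / 2 : ℝ)) -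
      (‖x - y‖ ^ 2 + (R ^ 2 - ‖x‖ ^ 2) * (R ^ 2 - ‖y‖ ^ 2) / R ^ 2) ^ (-((N - 2 : ℕ) / 2 : ℝ)) := by
  rw [greenK, one_div_pow_eq_sq_rpow (norm_nonneg _), one_div_pow_eq_sq_rpow (by positivity),
    sq_norm_mul_norm_sub_inversion hx hR.ne']

theorem stmt_19_general (N : ℕ) (R : ℝ) (hR : 0 < R)
    (a : EuclideanSpace ℝ (Fin N))
    (x y : EuclideanSpace ℝ (Fin N))
    (hxB : x ∈ Metric.closedBall (0 : EuclideanSpace ℝ (Fin N)) R)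
    (hyB : y ∈ Metric.closedBall (0 : EuclideanSpace ℝ (Fin N)) R)
    (hxH : 0 < ⟪a, x⟫) (hyH : 0 < ⟪a, y⟫) (hxy : x ≠ y) :
    greenK N R (reflectHyp0 a x) y ≤ greenK N R x y := by
  have hx : x ≠ 0 := by rintro rfl; simp at hxH
  have hσx : reflectHyp0 a x ≠ 0 := by
    rwa [← norm_ne_zero_iff, norm_reflectHyp0, norm_ne_zero_iff]
  rw [greenK_eq_rpow hR hσx, greenK_eq_rpow hR hx, norm_reflectHyp0, norm_reflectHyp0_sub_sq]
  set A := ‖x - y‖ ^ 2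
  set T := 4 * ⟪a, x⟫ * ⟪a, y⟫ / ⟪a, a⟫
  set s := (R ^ 2 - ‖x‖ ^ 2) * (R ^ 2 - ‖y‖ ^ 2) / R ^ 2
  have hA : 0 < A := pow_pos (norm_pos_iff.2 (sub_ne_zero.2 hxy)) 2
  have hT : 0 ≤ T := div_nonneg (by positivity) real_inner_self_nonneg
  have hs : 0 ≤ s := by
    rw [mem_closedBall_zero_iff] at hxB hyB
    exact div_nonneg (mul_nonneg (sub_nonneg.2 (pow_le_pow_left₀ (norm_nonneg x) hxB 2))
      (sub_nonneg.2 (pow_le_pow_left₀ (norm_nonneg y) hyB 2))) (sq_nonneg R)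
  have := (convexOn_rpow_of_nonpos (p := -((N - 2 : ℕ) / 2 : ℝ))
    (neg_nonpos.2 (by positivity))).increment_mono
    hA (mem_Ioi.2 (by positivity : 0 < A + T + s)) (le_add_of_nonneg_right hT) hs
  linarith

/-- For every open half-space `H = {x : ⟪a,x⟫ > 0}` with `0 ∈ ∂H` and
all `x, y ∈ H ∩ B_R` with `x ≠ y`, the Green-type kernel satisfies
`G(x,y) ≥ G(σ_H x, y)`. -/
theorem stmt_19 (N : ℕ) (hN : 3 ≤ N) (R : ℝ) (hR : 0 < R)
    (a : EuclideanSpace ℝ (Fin N)) (ha : a ≠ 0)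
    (x y : EuclideanSpace ℝ (Fin N))
    (hxB : x ∈ Metric.closedBall (0 : EuclideanSpace ℝ (Fin N)) R)
    (hyB : y ∈ Metric.closedBall (0 : EuclideanSpace ℝ (Fin N)) R)
    (hxH : 0 < ⟪a, x⟫) (hyH : 0 < ⟪a, y⟫) (hxy : x ≠ y) :
    greenK N R (reflectHyp0 a x) y ≤ greenK N R x y :=
  stmt_19_general N R hR a x y hxB hyB hxH hyH hxy
end
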